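/- arXiv:1609.01913 — 2 statements merged into one kernel-verified Lean document; each statement's English description precedes it below -/
import Mathlib

section
/- Let E be a finite meet-semilattice and let A be the unitization over ℂ of the semigroup algebra MonoidAlgebra ℂ E. For e ∈ E set p_e := e · ∏_{f ∈ E, e ⊓ f ≠ e} (1 − f) ∈ A. Then p_e is a nonzero element of Ẽ := { e₀(1−e₁)⋯(1−e_n) ∈ A : n ≥ 0, e_i ∈ E } \ {0}, and p_e is minimal in Ẽ: every q ∈ Ẽ with q · p_e = q satisfies q = p_e. -/
/-- A meet-semilattice regarded as a commutative semigroup with product `e * f = e ⊓ f`. -/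
instance semilatticeInfCommSemigroup (E : Type*) [SemilatticeInf E] : CommSemigroup E where
  mul := (· ⊓ ·)
  mul_assoc := inf_assoc
  mul_comm := inf_comm

/-- The canonical image of `e : E` in the unitization over `ℂ` of the semigroup
algebra `MonoidAlgebra ℂ E`. -/
noncomputable def semilatticeBasis {E : Type*} [SemilatticeInf E] (e : E) :
    Unitization ℂ (MonoidAlgebra ℂ E) :=
  Unitization.inr (MonoidAlgebra.single e (1 : ℂ))

/-- The set `Ẽ` of nonzero elements of the form `e₀ (1-e₁) ⋯ (1-eₙ)`. -/
def tildeE (E : Type*) [SemilatticeInf E] : Set (Unitization ℂ (MonoidAlgebra ℂ E)) :=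
  {p | p ≠ 0 ∧ ∃ (e₀ : E) (es : List E),
    p = semilatticeBasis e₀ * (es.map fun e => 1 - semilatticeBasis e).prod}

/-- The element `p_e = e ∏_{f : e ⊓ f ≠ e} (1 - f)`. -/
noncomputable def minProj {E : Type*} [SemilatticeInf E] [Fintype E] [DecidableEq E] (e : E) :
    Unitization ℂ (MonoidAlgebra ℂ E) :=
  semilatticeBasis e *
    ∏ f ∈ Finset.univ.filter (fun f => e ⊓ f ≠ e), (1 - semilatticeBasis f)

/-!
Left multiplication by `g ∈ E` fixes `p_e` when `e ≤ g`, and kills it otherwise, because then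
`1 - g` is one of the factors of `p_e` and `g (1 - g) = 0`. Hence `1 - g`, and therefore every
element `q` of `Ẽ`, also sends `p_e` to `0` or to `p_e`; so `q p_e = q` forces `q = p_e`, as
`q ≠ 0`. Finally `p_e ≠ 0` since the character `g ↦ [e ≤ g]` of the algebra takes the value `1`
on it.
-/

def fixesOrKills {M : Type*} [MonoidWithZero M] (p : M) : Submonoid M where
  carrier := {x | x * p = 0 ∨ x * p = p}
  one_mem' := Or.inr (one_mul p)
  mul_mem' {x y} hx hy := by
    simp only [Set.mem_ofPred_eq, mul_assoc] at hx hy ⊢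
    rcases hy with hy | hy <;> rw [hy]
    · exact Or.inl (mul_zero x)
    · exact hx

lemma one_sub_mem_fixesOrKills {R : Type*} [Ring R] {p a : R} (ha : a ∈ fixesOrKills p) :
    1 - a ∈ fixesOrKills p := by
  change a * p = 0 ∨ a * p = p at ha
  change (1 - a) * p = 0 ∨ (1 - a) * p = p
  rw [sub_mul, one_mul]
  rcases ha with ha | ha <;> rw [ha]
  · exact Or.inr (sub_zero p)
  · exact Or.inl (sub_self p)

section Semilattice

variable {E : Type*} [SemilatticeInf E]

lemma semilatticeBasis_mul_semilatticeBasis (g h : E) :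
    semilatticeBasis g * semilatticeBasis h = semilatticeBasis (g ⊓ h) := by
  rw [semilatticeBasis, semilatticeBasis, ← Unitization.inr_mul, MonoidAlgebra.single_mul_single,
    one_mul]
  rfl

lemma semilatticeBasis_mul_one_sub_self (g : E) :
    semilatticeBasis g * (1 - semilatticeBasis g) = 0 := by
  rw [mul_one_sub, semilatticeBasis_mul_semilatticeBasis, inf_idem, sub_self]

open Classical in
noncomputable def principalFilterIndicator (e : E) : E →ₙ* ℂ where
  toFun g := if e ≤ g then 1 else 0
  map_mul' g h := by
    change (if e ≤ g ⊓ h then (1 : ℂ) else 0) = _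
    simp only [le_inf_iff, ite_and]
    split_ifs <;> simp

noncomputable def principalFilterChar (e : E) : Unitization ℂ (MonoidAlgebra ℂ E) →ₐ[ℂ] ℂ :=
  Unitization.lift (MonoidAlgebra.liftMagma ℂ (principalFilterIndicator e))

lemma principalFilterChar_semilatticeBasis_of_le {e g : E} (h : e ≤ g) :
    principalFilterChar e (semilatticeBasis g) = 1 := by
  simp [principalFilterChar, semilatticeBasis, principalFilterIndicator, h]

lemma principalFilterChar_semilatticeBasis_of_not_le {e g : E} (h : ¬e ≤ g) :
    principalFilterChar e (semilatticeBasis g) = 0 := by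
  simp [principalFilterChar, semilatticeBasis, principalFilterIndicator, h]

variable [Fintype E] [DecidableEq E]

lemma mem_filter_inf_ne_self_iff {e f : E} :
    f ∈ Finset.univ.filter (fun f => e ⊓ f ≠ e) ↔ ¬e ≤ f := by
  simp

lemma principalFilterChar_minProj (e : E) : principalFilterChar e (minProj e) = 1 := by
  rw [minProj, map_mul, map_prod, principalFilterChar_semilatticeBasis_of_le le_rfl, one_mul]
  refine Finset.prod_eq_one fun f hf => ?_
  rw [map_sub, map_one,
    principalFilterChar_semilatticeBasis_of_not_le (mem_filter_inf_ne_self_iff.1 hf), sub_zero]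

lemma minProj_ne_zero (e : E) : minProj e ≠ 0 := fun h => by
  simpa [h] using principalFilterChar_minProj e

lemma minProj_mem_tildeE (e : E) : minProj e ∈ tildeE E :=
  ⟨minProj_ne_zero e, e, (Finset.univ.filter (fun f => e ⊓ f ≠ e)).toList, by
    rw [Finset.prod_map_toList, minProj]⟩

lemma semilatticeBasis_mul_minProj_of_le {e g : E} (h : e ≤ g) :
    semilatticeBasis g * minProj e = minProj e := by
  rw [minProj, ← mul_assoc, semilatticeBasis_mul_semilatticeBasis, inf_eq_right.2 h]

lemma semilatticeBasis_mul_minProj_of_not_le {e g : E} (h : ¬e ≤ g) :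
    semilatticeBasis g * minProj e = 0 := by
  rw [minProj, ← Finset.mul_prod_erase _ _ (mem_filter_inf_ne_self_iff.2 h), mul_left_comm,
    ← mul_assoc (semilatticeBasis g), semilatticeBasis_mul_one_sub_self, zero_mul, mul_zero]

lemma semilatticeBasis_mem_fixesOrKills_minProj (e g : E) :
    semilatticeBasis g ∈ fixesOrKills (minProj e) := by
  by_cases h : e ≤ g
  · exact Or.inr (semilatticeBasis_mul_minProj_of_le h)
  · exact Or.inl (semilatticeBasis_mul_minProj_of_not_le h)

lemma mem_fixesOrKills_minProj_of_mem_tildeE (e : E) {q : Unitization ℂ (MonoidAlgebra ℂ E)}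
    (hq : q ∈ tildeE E) : q ∈ fixesOrKills (minProj e) := by
  obtain ⟨-, e₀, es, rfl⟩ := hq
  refine mul_mem (semilatticeBasis_mem_fixesOrKills_minProj e e₀) (list_prod_mem ?_)
  simp only [List.mem_map]
  rintro _ ⟨f, -, rfl⟩
  exact one_sub_mem_fixesOrKills (semilatticeBasis_mem_fixesOrKills_minProj e f)

end Semilattice

/-- For a finite meet-semilattice `E`, the element `p_e` is a nonzero element of `Ẽ`
and is minimal in `Ẽ`: every `q ∈ Ẽ` with `q p_e = q` equals `p_e`. -/
theorem stmt_2 {E : Type*} [SemilatticeInf E] [Fintype E] [DecidableEq E] (e : E) :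
    minProj e ∈ tildeE E ∧
      ∀ q ∈ tildeE E, q * minProj e = q → q = minProj e := by
  refine ⟨minProj_mem_tildeE e, fun q hq hqe => ?_⟩
  rcases mem_fixesOrKills_minProj_of_mem_tildeE e hq with h | h
  · exact absurd (hqe ▸ h) hq.1
  · rw [← hqe, h]
end

section
/- Let G be an inverse semigroup with idempotent set E and let A be the unitization over ℂ of the semigroup algebra MonoidAlgebra ℂ G, with the involution extending g ↦ g*. Let Ẽ := { e₀(1−e₁)⋯(1−e_n) ∈ A : n ≥ 0, e_i ∈ E } \ {0} and G̃ := { g · p ∈ A : g ∈ G, p ∈ Ẽ } \ {0}. Then: (i) the product of any two elements of Ẽ lies in Ẽ ∪ {0}; (ii) the product of any two elements of G̃ lies in G̃ ∪ {0}; (iii) G̃ is closed under the involution of A; and (iv) every t ∈ G̃ satisfies t · t* · t = t. In particular G̃ ∪ {0} is an inverse semigroup under the multiplication and involution of A. -/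
/-- An inverse semigroup: a semigroup with an involution `g ↦ g*` such that
`g** = g`, `(gh)* = h* g*`, `g g* g = g`, and any two idempotents commute. -/
class InverseSemigroup (G : Type*) extends Semigroup G, Star G where
  star_star : ∀ g : G, star (star g) = g
  star_mul : ∀ g h : G, star (g * h) = star h * star g
  mul_star_mul_self : ∀ g : G, g * star g * g = g
  idem_mul_comm : ∀ e f : G, e * e = e → f * f = f → e * f = f * e

/-- The canonical image of `g : G` in the unitization over `ℂ` of the semigroup
algebra `MonoidAlgebra ℂ G`. -/
noncomputable def sgBasis {G : Type*} [InverseSemigroup G] (g : G) :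
    Unitization ℂ (MonoidAlgebra ℂ G) :=
  Unitization.inr (MonoidAlgebra.single g (1 : ℂ))

/-- The conjugate-linear involution on the unitization of the semigroup algebra
extending `g ↦ g*`. -/
noncomputable def astar {G : Type*} [InverseSemigroup G]
    (x : Unitization ℂ (MonoidAlgebra ℂ G)) : Unitization ℂ (MonoidAlgebra ℂ G) :=
  Unitization.inl (starRingEnd ℂ x.fst) +
    Unitization.inr
      (MonoidAlgebra.ofCoeff (Finsupp.mapDomain (star : G → G)
        (Finsupp.mapRange (starRingEnd ℂ) (map_zero _) x.snd.coeff)))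

/-- The set `Ẽ` of nonzero elements of the form `e₀ (1-e₁) ⋯ (1-eₙ)`, `eᵢ ∈ E`. -/
def tildeEG (G : Type*) [InverseSemigroup G] : Set (Unitization ℂ (MonoidAlgebra ℂ G)) :=
  {p | p ≠ 0 ∧ ∃ (e₀ : G) (es : List G), e₀ * e₀ = e₀ ∧ (∀ e ∈ es, e * e = e) ∧
    p = sgBasis e₀ * (es.map fun e => 1 - sgBasis e).prod}

/-- The set `G̃` of nonzero elements of the form `g p` with `g ∈ G`, `p ∈ Ẽ`. -/
def tildeG (G : Type*) [InverseSemigroup G] : Set (Unitization ℂ (MonoidAlgebra ℂ G)) :=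
  {t | t ≠ 0 ∧ ∃ (g : G) (p : Unitization ℂ (MonoidAlgebra ℂ G)),
    p ∈ tildeEG G ∧ t = sgBasis g * p}

/-! The elements `e` and `1 - e` of the algebra, for `e ∈ E`, are pairwise commuting idempotents,
so the submonoid `𝓔` they generate is commutative, consists of idempotents, and is fixed by the
involution. `Ẽ` lies in `𝓔` and is stable under left multiplication by `𝓔`. The identity
`e h = h (h* e h)` lets every element of `𝓔` pass to the right of a basis element `h`, conjugated
by `h`; so `(g p)(h q) = (g h)(p' q)` and `(g p)* = p g* = g* p'`. An idempotent `t = t t* t` of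
`G̃` equals `(t t*)(t* t)`, a product of two elements of `Ẽ`, so idempotents of `G̃` commute. -/

namespace InverseSemigroup

variable {G : Type*} [InverseSemigroup G] {e : G}

lemma star_mul_self_mul_star (g : G) : star g * g * star g = star g := by
  simpa only [InverseSemigroup.star_star] using mul_star_mul_self (star g)

lemma isIdempotentElem_mul_star (g : G) : IsIdempotentElem (g * star g) := by
  rw [IsIdempotentElem, ← mul_assoc, mul_star_mul_self]

lemma isIdempotentElem_star_mul (g : G) : IsIdempotentElem (star g * g) := by
  rw [IsIdempotentElem, ← mul_assoc, star_mul_self_mul_star]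

lemma commute_of_isIdempotentElem {f : G} (he : IsIdempotentElem e) (hf : IsIdempotentElem f) :
    Commute e f :=
  idem_mul_comm e f he hf

/-- `star e = (star e * e) * (e * star e)` is a product of commuting idempotents, hence an
idempotent commuting with `e`; then `e` and `star e` both reduce to `e * star e`. -/
lemma star_eq_self_of_isIdempotentElem (he : IsIdempotentElem e) : star e = e := by
  set f := star e
  have hfef : f * e * f = f := star_mul_self_mul_star e
  have hf : IsIdempotentElem f := by
    have hfac : f = (f * e) * (e * f) := by
      rw [← mul_assoc, mul_assoc f e e, he.eq, hfef]
    rw [hfac]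
    exact .mul_of_commute (commute_of_isIdempotentElem (isIdempotentElem_star_mul e)
      (isIdempotentElem_mul_star e)) (isIdempotentElem_star_mul e) (isIdempotentElem_mul_star e)
  have hcomm : e * f = f * e := commute_of_isIdempotentElem he hf
  calc f = f * e * f := hfef.symm
    _ = e * f := by rw [← hcomm, mul_assoc, hf.eq]
    _ = e * f * e := by rw [mul_assoc, ← hcomm, ← mul_assoc, he.eq]
    _ = e := mul_star_mul_self e

lemma isIdempotentElem_star_mul_mul (g : G) (he : IsIdempotentElem e) :
    IsIdempotentElem (star g * e * g) :=
  calc star g * e * g * (star g * e * g)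
      = star g * (e * (g * star g) * e) * g := by simp only [mul_assoc]
    _ = star g * (g * star g) * (e * e) * g := by
        rw [commute_of_isIdempotentElem he (isIdempotentElem_mul_star g) |>.eq]
        simp only [mul_assoc]
    _ = star g * e * g := by rw [he.eq, ← mul_assoc, star_mul_self_mul_star]

lemma mul_eq_mul_star_mul_mul (he : IsIdempotentElem e) (g : G) :
    e * g = g * (star g * e * g) :=
  calc e * g = e * (g * star g) * g := by rw [mul_assoc e, mul_star_mul_self]
    _ = g * (star g * e * g) := by
        rw [commute_of_isIdempotentElem he (isIdempotentElem_mul_star g) |>.eq]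
        simp only [mul_assoc]

end InverseSemigroup

section UnitizedSemigroupAlgebra

open InverseSemigroup MonoidAlgebra

variable {G : Type*} [InverseSemigroup G] {e f : G}

local notation "𝒜" => Unitization ℂ (MonoidAlgebra ℂ G)

variable {p q s t x : Unitization ℂ (MonoidAlgebra ℂ G)}

lemma sgBasis_mul_sgBasis (g h : G) : sgBasis g * sgBasis h = sgBasis (g * h) := by
  rw [sgBasis, sgBasis, sgBasis, ← Unitization.inr_mul, single_mul_single, one_mul]

noncomputable def starCoeffs : MonoidAlgebra ℂ G →+ MonoidAlgebra ℂ G where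
  toFun m := mapDomain star (map (starRingEnd ℂ).toAddMonoidHom m)
  map_zero' := by simp
  map_add' m n := by simp only [MonoidAlgebra.map_add, mapDomain_add]

lemma starCoeffs_single (g : G) (c : ℂ) :
    starCoeffs (single g c) = single (star g) (starRingEnd ℂ c) := by
  simp [starCoeffs]

lemma starCoeffs_smul (c : ℂ) (m : MonoidAlgebra ℂ G) :
    starCoeffs (c • m) = starRingEnd ℂ c • starCoeffs m := by
  induction m using MonoidAlgebra.induction_linear with
  | zero => simp
  | add m n hm hn => rw [smul_add, map_add, hm, hn, map_add, smul_add]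
  | single g d => rw [smul_single', starCoeffs_single, starCoeffs_single, smul_single', map_mul]

lemma starCoeffs_mul (m n : MonoidAlgebra ℂ G) :
    starCoeffs (m * n) = starCoeffs n * starCoeffs m := by
  induction m using MonoidAlgebra.induction_linear with
  | zero => simp
  | add m m' hm hm' => rw [add_mul, map_add, hm, hm', map_add, mul_add]
  | single g c =>
    induction n using MonoidAlgebra.induction_linear with
    | zero => simp
    | add n n' hn hn' => rw [mul_add, map_add, hn, hn', map_add, add_mul]
    | single h d =>
      simp only [single_mul_single, starCoeffs_single, InverseSemigroup.star_mul, map_mul, mul_comm]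

lemma starCoeffs_starCoeffs (m : MonoidAlgebra ℂ G) : starCoeffs (starCoeffs m) = m := by
  induction m using MonoidAlgebra.induction_linear with
  | zero => simp
  | add m n hm hn => rw [map_add, map_add, hm, hn]
  | single g c => simp [starCoeffs_single, InverseSemigroup.star_star]

@[simp]
lemma astar_fst (x : 𝒜) : (astar x).fst = starRingEnd ℂ x.fst := by simp [astar]

@[simp]
lemma astar_snd (x : 𝒜) : (astar x).snd = starCoeffs x.snd := by
  simp only [astar, Unitization.snd_add, Unitization.snd_inl, Unitization.snd_inr, zero_add]
  rfl

lemma astar_astar (x : 𝒜) : astar (astar x) = x := by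
  refine Unitization.ext ?_ ?_ <;> simp [starCoeffs_starCoeffs]

@[simp]
lemma astar_eq_zero {x : 𝒜} : astar x = 0 ↔ x = 0 := by
  have astar_zero : astar (0 : 𝒜) = 0 := by refine Unitization.ext ?_ ?_ <;> simp
  exact ⟨fun h => by rw [← astar_astar x, h, astar_zero], fun h => h ▸ astar_zero⟩

lemma astar_mul (x y : 𝒜) : astar (x * y) = astar y * astar x := by
  refine Unitization.ext ?_ ?_
  · simp [mul_comm]
  · simp only [astar_snd, astar_fst, Unitization.snd_mul, map_add, starCoeffs_smul, starCoeffs_mul]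
    abel

lemma astar_add (x y : 𝒜) : astar (x + y) = astar x + astar y := by
  refine Unitization.ext ?_ ?_ <;> simp

lemma astar_neg (x : 𝒜) : astar (-x) = -astar x := by
  refine Unitization.ext ?_ ?_ <;> simp

lemma astar_sub (x y : 𝒜) : astar (x - y) = astar x - astar y := by
  rw [sub_eq_add_neg, astar_add, astar_neg, sub_eq_add_neg]

lemma astar_one : astar (1 : 𝒜) = 1 := by
  refine Unitization.ext ?_ ?_ <;> simp

lemma astar_sgBasis (g : G) : astar (sgBasis g) = sgBasis (star g) := by
  refine Unitization.ext ?_ ?_ <;> simp [sgBasis, starCoeffs_single]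

variable (G) in
def idempotentFactors : Set (Unitization ℂ (MonoidAlgebra ℂ G)) :=
  {x | ∃ e : G, IsIdempotentElem e ∧ (x = sgBasis e ∨ x = 1 - sgBasis e)}

local notation "𝓔" => Submonoid.closure (idempotentFactors G)

lemma sgBasis_mem_closure (he : IsIdempotentElem e) : sgBasis e ∈ 𝓔 :=
  Submonoid.subset_closure ⟨e, he, .inl rfl⟩

lemma one_sub_sgBasis_mem_closure (he : IsIdempotentElem e) : 1 - sgBasis e ∈ 𝓔 :=
  Submonoid.subset_closure ⟨e, he, .inr rfl⟩

lemma commute_sgBasis (he : IsIdempotentElem e) (hf : IsIdempotentElem f) :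
    Commute (sgBasis e) (sgBasis f) := by
  rw [Commute, SemiconjBy, sgBasis_mul_sgBasis, sgBasis_mul_sgBasis,
    (commute_of_isIdempotentElem he hf).eq]

lemma commute_of_mem_idempotentFactors {x y : 𝒜} (hx : x ∈ idempotentFactors G)
    (hy : y ∈ idempotentFactors G) : Commute x y := by
  obtain ⟨e, he, hx⟩ := hx
  have hey : Commute (sgBasis e) y := by
    obtain ⟨f, hf, rfl | rfl⟩ := hy
    · exact commute_sgBasis he hf
    · exact (Commute.one_right _).sub_right (commute_sgBasis he hf)
  rcases hx with rfl | rfl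
  · exact hey
  · exact (Commute.one_left y).sub_left hey

lemma commute_of_mem_closure {x y : 𝒜} (hx : x ∈ 𝓔) (hy : y ∈ 𝓔) : Commute x y :=
  Set.centralizer_centralizer_comm_of_comm
    (fun _ ha _ hb => (commute_of_mem_idempotentFactors ha hb).eq) x
    (Submonoid.closure_le_centralizer_centralizer _ hx) y
    (Submonoid.closure_le_centralizer_centralizer _ hy)

lemma isIdempotentElem_of_mem_closure {x : 𝒜} (hx : x ∈ 𝓔) : IsIdempotentElem x := by
  induction hx using Submonoid.closure_induction with
  | mem x hx =>
    obtain ⟨e, he, rfl | rfl⟩ := hx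
    · rw [IsIdempotentElem, sgBasis_mul_sgBasis, he.eq]
    · exact IsIdempotentElem.one_sub (by rw [IsIdempotentElem, sgBasis_mul_sgBasis, he.eq])
  | one => exact .one
  | mul x y hx hy ihx ihy => exact .mul_of_commute (commute_of_mem_closure hx hy) ihx ihy

lemma astar_eq_self_of_mem_closure {x : 𝒜} (hx : x ∈ 𝓔) : astar x = x := by
  induction hx using Submonoid.closure_induction with
  | mem x hx =>
    obtain ⟨e, he, rfl | rfl⟩ := hx
    · rw [astar_sgBasis, star_eq_self_of_isIdempotentElem he]
    · rw [astar_sub, astar_one, astar_sgBasis, star_eq_self_of_isIdempotentElem he]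
  | one => exact astar_one
  | mul x y hx hy ihx ihy => rw [astar_mul, ihx, ihy, (commute_of_mem_closure hx hy).eq]

lemma sgBasis_mul_sgBasis_eq_sgBasis_mul_sgBasis_conj (he : IsIdempotentElem e) (h : G) :
    sgBasis e * sgBasis h = sgBasis h * sgBasis (star h * e * h) := by
  rw [sgBasis_mul_sgBasis, sgBasis_mul_sgBasis, mul_eq_mul_star_mul_mul he]

lemma exists_mul_sgBasis_eq_sgBasis_mul {x : 𝒜} (hx : x ∈ 𝓔) (h : G) :
    ∃ y ∈ 𝓔, x * sgBasis h = sgBasis h * y := by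
  induction hx using Submonoid.closure_induction with
  | mem x hx =>
    obtain ⟨e, he, rfl | rfl⟩ := hx
    · exact ⟨_, sgBasis_mem_closure (isIdempotentElem_star_mul_mul h he),
        sgBasis_mul_sgBasis_eq_sgBasis_mul_sgBasis_conj he h⟩
    · refine ⟨_, one_sub_sgBasis_mem_closure (isIdempotentElem_star_mul_mul h he), ?_⟩
      rw [sub_mul, mul_sub, one_mul, mul_one, sgBasis_mul_sgBasis_eq_sgBasis_mul_sgBasis_conj he h]
  | one => exact ⟨1, one_mem _, by rw [one_mul, mul_one]⟩
  | mul x y _ _ ihx ihy =>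
    obtain ⟨x', hx', hxh⟩ := ihx
    obtain ⟨y', hy', hyh⟩ := ihy
    exact ⟨x' * y', mul_mem hx' hy', by rw [mul_assoc, hyh, ← mul_assoc, hxh, mul_assoc]⟩

def IsEProduct (p : 𝒜) : Prop :=
  ∃ (e₀ : G) (es : List G), IsIdempotentElem e₀ ∧ (∀ e ∈ es, IsIdempotentElem e) ∧
    p = sgBasis e₀ * (es.map fun e => 1 - sgBasis e).prod

lemma mem_tildeEG_iff : p ∈ tildeEG G ↔ p ≠ 0 ∧ IsEProduct p := Iff.rfl

lemma isEProduct_sgBasis (he : IsIdempotentElem e) : IsEProduct (sgBasis e) :=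
  ⟨e, [], he, by simp, by simp⟩

lemma IsEProduct.mem_closure (hp : IsEProduct p) : p ∈ 𝓔 := by
  obtain ⟨e₀, es, he₀, hes, rfl⟩ := hp
  refine mul_mem (sgBasis_mem_closure he₀) (list_prod_mem fun y hy => ?_)
  obtain ⟨e, he, rfl⟩ := List.mem_map.1 hy
  exact one_sub_sgBasis_mem_closure (hes e he)

lemma IsEProduct.isIdempotentElem (hp : IsEProduct p) : IsIdempotentElem p :=
  isIdempotentElem_of_mem_closure hp.mem_closure

lemma IsEProduct.astar_eq_self (hp : IsEProduct p) : astar p = p :=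
  astar_eq_self_of_mem_closure hp.mem_closure

lemma IsEProduct.mul_left (hp : IsEProduct p) (hx : x ∈ 𝓔) : IsEProduct (x * p) := by
  induction hx using Submonoid.closure_induction generalizing p with
  | mem x hx =>
    obtain ⟨f₀, fs, hf₀, hfs, rfl⟩ := hp
    obtain ⟨e, he, rfl | rfl⟩ := hx
    · have hef : IsIdempotentElem (e * f₀) :=
        .mul_of_commute (commute_of_isIdempotentElem he hf₀) he hf₀
      exact ⟨e * f₀, fs, hef, hfs, by rw [← mul_assoc, sgBasis_mul_sgBasis]⟩
    · refine ⟨f₀, e :: fs, hf₀, List.forall_mem_cons.2 ⟨he, hfs⟩, ?_⟩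
      rw [List.map_cons, List.prod_cons, ← mul_assoc, ← mul_assoc,
        (commute_of_mem_closure (one_sub_sgBasis_mem_closure he) (sgBasis_mem_closure hf₀)).eq]
  | one => rwa [one_mul]
  | mul x y _ _ ihx ihy => rw [mul_assoc]; exact ihx (ihy hp)

lemma IsEProduct.mul (hp : IsEProduct p) (hq : IsEProduct q) : IsEProduct (p * q) :=
  hq.mul_left hp.mem_closure

lemma IsEProduct.exists_mul_sgBasis_eq (hp : IsEProduct p) (h : G) :
    ∃ q, IsEProduct q ∧ p * sgBasis h = sgBasis h * q := by
  obtain ⟨y, hy, hph⟩ := exists_mul_sgBasis_eq_sgBasis_mul hp.mem_closure h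
  -- `h = h (h* h)` supplies the leading basis element of an `E`-product
  have hh := isIdempotentElem_star_mul h
  refine ⟨y * sgBasis (star h * h), (isEProduct_sgBasis hh).mul_left hy, ?_⟩
  rw [hph, (commute_of_mem_closure hy (sgBasis_mem_closure hh)).eq, ← mul_assoc,
    sgBasis_mul_sgBasis, ← mul_assoc, mul_star_mul_self]

def IsGProduct (t : 𝒜) : Prop :=
  ∃ (g : G) (p : 𝒜), IsEProduct p ∧ t = sgBasis g * p

lemma mem_tildeG_iff : t ∈ tildeG G ↔ t ≠ 0 ∧ IsGProduct t := by
  constructor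
  · rintro ⟨ht, g, p, hp, rfl⟩
    exact ⟨ht, g, p, hp.2, rfl⟩
  · rintro ⟨ht, g, p, hp, rfl⟩
    exact ⟨ht, g, p, ⟨fun hp0 => ht (by rw [hp0, mul_zero]), hp⟩, rfl⟩

lemma IsGProduct.mul (hs : IsGProduct s) (ht : IsGProduct t) : IsGProduct (s * t) := by
  obtain ⟨g, p, hp, rfl⟩ := hs
  obtain ⟨h, q, hq, rfl⟩ := ht
  obtain ⟨p', hp', hph⟩ := hp.exists_mul_sgBasis_eq h
  refine ⟨g * h, p' * q, hp'.mul hq, ?_⟩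
  rw [← sgBasis_mul_sgBasis, mul_assoc, ← mul_assoc p, hph]
  simp only [mul_assoc]

lemma IsGProduct.mul_astar_mul_self (ht : IsGProduct t) : t * astar t * t = t := by
  obtain ⟨g, p, hp, rfl⟩ := ht
  have hcomm := commute_of_mem_closure hp.mem_closure
    (sgBasis_mem_closure (isIdempotentElem_star_mul g))
  calc sgBasis g * p * astar (sgBasis g * p) * (sgBasis g * p)
      = sgBasis g * (p * p) * (sgBasis (star g) * sgBasis g) * p := by
        rw [astar_mul, hp.astar_eq_self, astar_sgBasis]
        simp only [mul_assoc]
    _ = sgBasis g * sgBasis (star g * g) * p := by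
        rw [hp.isIdempotentElem.eq, sgBasis_mul_sgBasis, mul_assoc (sgBasis g) p, hcomm.eq]
        simp only [mul_assoc, hp.isIdempotentElem.eq]
    _ = sgBasis g * p := by
        rw [sgBasis_mul_sgBasis, ← mul_assoc g, mul_star_mul_self]

lemma IsGProduct.isEProduct_mul_astar (ht : IsGProduct t) : IsEProduct (t * astar t) := by
  obtain ⟨g, p, hp, rfl⟩ := ht
  obtain ⟨q, hq, hpg⟩ := hp.exists_mul_sgBasis_eq (star g)
  convert hq.mul_left (sgBasis_mem_closure (isIdempotentElem_mul_star g)) using 1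
  rw [astar_mul, hp.astar_eq_self, astar_sgBasis, ← sgBasis_mul_sgBasis, mul_assoc,
    ← mul_assoc p, hp.isIdempotentElem.eq, hpg, mul_assoc]

lemma IsGProduct.isEProduct_astar_mul (ht : IsGProduct t) : IsEProduct (astar t * t) := by
  obtain ⟨g, p, hp, rfl⟩ := ht
  convert hp.mul (hp.mul_left (sgBasis_mem_closure (isIdempotentElem_star_mul g))) using 1
  rw [astar_mul, hp.astar_eq_self, astar_sgBasis, ← sgBasis_mul_sgBasis]
  simp only [mul_assoc]

lemma IsGProduct.isEProduct_of_isIdempotentElem (ht : IsGProduct t) (htt : IsIdempotentElem t) :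
    IsEProduct t := by
  have hstar : IsIdempotentElem (astar t) := by rw [IsIdempotentElem, ← astar_mul, htt.eq]
  have hfac : t = t * astar t * (astar t * t) := by
    rw [← mul_assoc, mul_assoc t, hstar.eq, ht.mul_astar_mul_self]
  rw [hfac]
  exact ht.isEProduct_mul_astar.mul ht.isEProduct_astar_mul

lemma IsGProduct.astar (ht : IsGProduct t) : IsGProduct (astar t) := by
  obtain ⟨g, p, hp, rfl⟩ := ht
  obtain ⟨q, hq, hpg⟩ := hp.exists_mul_sgBasis_eq (star g)
  exact ⟨star g, q, hq, by rw [astar_mul, hp.astar_eq_self, astar_sgBasis, hpg]⟩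

end UnitizedSemigroupAlgebra

/-- `Ẽ` and `G̃` are closed under multiplication up to `0`, `G̃` is closed under the
involution, every `t ∈ G̃` satisfies `t t* t = t`, and any two idempotents of `G̃`
commute; in particular `G̃ ∪ {0}` is an inverse semigroup under the multiplication and
involution of the unitization of the semigroup algebra. -/
theorem stmt_18 {G : Type*} [InverseSemigroup G] :
    (∀ p ∈ tildeEG G, ∀ q ∈ tildeEG G, p * q ∈ tildeEG G ∪ {0}) ∧
    (∀ s ∈ tildeG G, ∀ t ∈ tildeG G, s * t ∈ tildeG G ∪ {0}) ∧
    (∀ t ∈ tildeG G, astar t ∈ tildeG G) ∧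
    (∀ t ∈ tildeG G, t * astar t * t = t) ∧
    (∀ s ∈ tildeG G, ∀ t ∈ tildeG G, s * s = s → t * t = t → s * t = t * s) := by
  refine ⟨fun p hp q hq => ?_, fun s hs t ht => ?_, fun t ht => ?_, fun t ht => ?_,
    fun s hs t ht hss htt => ?_⟩
  · exact or_iff_not_imp_right.2 fun hpq =>
      ⟨hpq, (mem_tildeEG_iff.1 hp).2.mul (mem_tildeEG_iff.1 hq).2⟩
  · exact or_iff_not_imp_right.2 fun hst =>
      mem_tildeG_iff.2 ⟨hst, (mem_tildeG_iff.1 hs).2.mul (mem_tildeG_iff.1 ht).2⟩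
  · obtain ⟨ht0, ht⟩ := mem_tildeG_iff.1 ht
    exact mem_tildeG_iff.2 ⟨fun h => ht0 (astar_eq_zero.1 h), ht.astar⟩
  · exact (mem_tildeG_iff.1 ht).2.mul_astar_mul_self
  · have hs := (mem_tildeG_iff.1 hs).2.isEProduct_of_isIdempotentElem hss
    have ht := (mem_tildeG_iff.1 ht).2.isEProduct_of_isIdempotentElem htt
    exact commute_of_mem_closure hs.mem_closure ht.mem_closure
end
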